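/- With the setup below, there exists R₀ < ∞ depending only on d such that for all R ≥ max(R₀, 2·max_{3≤i≤d}|p_i|) and all integers m ≥ 1 the following holds: for all distinct integers i ≠ j such that the balls D_i = B((i,0,…,0), 1/8) and D_j = B((j,0,…,0), 1/8) are contained in 𝔠_{1,m}, and every axis-parallel closed cube B₁ ⊂ B¹_{R^m} of sidelength 1, no line of ℝ^d intersects all three of the sets B₁, D_i and D_j. In other words, the sets of lines meeting both D_i and B₁, taken over the integers i with D_i ⊂ 𝔠_{1,m}, are pairwise disjoint. -/

import Mathlib

/-!
Look at the plane of the coordinates `x₁, x₄`. A line meeting `D_i` and `D_j` passes through two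
points within `1/8` of the `x₁`-axis whose `x₁`-coordinates differ by at least `3/4`, so in this
plane its slope is at most `1/3`. Between such a point and the box `B¹_{R^m}` the coordinate `x₁`
changes by at most `R^m + 1/8`, so the line stays below height `(R^m + 1/8)/3 + 1/8`, whereas the box
lies above height `(N - 1/2)·R^m - |p₄| ≥ 40·R^m`.
-/

open MeasureTheory
open scoped ENNReal

noncomputable section

/-- A line in `ℝ^d`: a set of the form `{a + t • v : t ∈ ℝ}` with `v ≠ 0`. -/
def IsLine {d : ℕ} (L : Set (EuclideanSpace ℝ (Fin d))) : Prop :=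
  ∃ a v : EuclideanSpace ℝ (Fin d), v ≠ 0 ∧ L = {x | ∃ t : ℝ, x = a + t • v}

/-- The standard basis vector of `ℝ^d` with a `1` in (0-indexed) coordinate `i`
(junk value `0` if `i ≥ d`). -/
def stdv (d i : ℕ) : EuclideanSpace ℝ (Fin d) :=
  if h : i < d then EuclideanSpace.single (⟨i, h⟩ : Fin d) 1 else 0

/-- The (0-indexed) `i`-th coordinate of a vector (junk value `0` if `i ≥ d`). -/
def coordNat {d : ℕ} (x : EuclideanSpace ℝ (Fin d)) (i : ℕ) : ℝ :=
  if h : i < d then x ⟨i, h⟩ else 0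

/-- The cylinder of radius `r` around a set `L`. -/
def cylinder {d : ℕ} (L : Set (EuclideanSpace ℝ (Fin d))) (r : ℝ) :
    Set (EuclideanSpace ℝ (Fin d)) :=
  {x | Metric.infDist x L ≤ r}

/-- The line `L₁ = {t • e₁ : t ∈ ℝ}`. -/
def lineOne (d : ℕ) : Set (EuclideanSpace ℝ (Fin d)) := {x | ∃ t : ℝ, x = t • stdv d 0}

/-- The cylinder `𝔠₁` of radius `√d` around `L₁`. -/
def cylOne (d : ℕ) : Set (EuclideanSpace ℝ (Fin d)) := cylinder (lineOne d) (Real.sqrt d)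

/-- The piece `𝔠_{1,m} = {x ∈ 𝔠₁ : R^{m-1}/2 ≤ |x₁| < R^m/2 - 10√d}`. -/
def cylOnePiece (d : ℕ) (R : ℝ) (m : ℕ) : Set (EuclideanSpace ℝ (Fin d)) :=
  {x ∈ cylOne d | R ^ (m - 1) / 2 ≤ |coordNat x 0| ∧
    |coordNat x 0| < R ^ m / 2 - 10 * Real.sqrt d}

/-- The direction vector `(l₁, l₂, 0, …, 0)` of the line `L₂`. -/
def dirTwo (d : ℕ) (l1 l2 : ℝ) : EuclideanSpace ℝ (Fin d) := l1 • stdv d 0 + l2 • stdv d 1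

/-- The line `L₂ = {p + t • (l₁, l₂, 0, …, 0) : t ∈ ℝ}`. -/
def lineTwo (d : ℕ) (p : EuclideanSpace ℝ (Fin d)) (l1 l2 : ℝ) :
    Set (EuclideanSpace ℝ (Fin d)) :=
  {x | ∃ t : ℝ, x = p + t • dirTwo d l1 l2}

/-- The cylinder `𝔠₂` of radius `√d` around `L₂`. -/
def cylTwo (d : ℕ) (p : EuclideanSpace ℝ (Fin d)) (l1 l2 : ℝ) :
    Set (EuclideanSpace ℝ (Fin d)) :=
  cylinder (lineTwo d p l1 l2) (Real.sqrt d)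

/-- Orthogonal projection onto the affine line `L₂` (valid when `(l₁,l₂)` is a unit vector). -/
def projLineTwo (d : ℕ) (p : EuclideanSpace ℝ (Fin d)) (l1 l2 : ℝ)
    (x : EuclideanSpace ℝ (Fin d)) : EuclideanSpace ℝ (Fin d) :=
  p + (inner ℝ (x - p) (dirTwo d l1 l2) : ℝ) • dirTwo d l1 l2

/-- The piece `𝔠_{2,m} = {x ∈ 𝔠₂ : R^{m-1}/2 ≤ |Π_{L₂}(x) - p| < R^m/2 - 10√d}`. -/
def cylTwoPiece (d : ℕ) (p : EuclideanSpace ℝ (Fin d)) (l1 l2 R : ℝ) (m : ℕ) :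
    Set (EuclideanSpace ℝ (Fin d)) :=
  {x ∈ cylTwo d p l1 l2 | R ^ (m - 1) / 2 ≤ dist (projLineTwo d p l1 l2 x) p ∧
    dist (projLineTwo d p l1 l2 x) p < R ^ m / 2 - 10 * Real.sqrt d}

/-- The point `q_{i,m} = p + N·R^m·e_{i+3}` (`i` is 1-based), where `N = 10d + 1`. -/
def qpt (d : ℕ) (p : EuclideanSpace ℝ (Fin d)) (R : ℝ) (m i : ℕ) :
    EuclideanSpace ℝ (Fin d) :=
  p + ((10 * d + 1 : ℝ) * R ^ m) • stdv d (i + 2)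

/-- The box `B^i_{R^m} = q_{i,m} + [-R^m/2, R^m/2]^d` (`i` is 1-based). -/
def bigBox (d : ℕ) (p : EuclideanSpace ℝ (Fin d)) (R : ℝ) (m i : ℕ) :
    Set (EuclideanSpace ℝ (Fin d)) :=
  {x | ∀ j : Fin d, |x j - qpt d p R m i j| ≤ R ^ m / 2}

/-- A line `L` meets both sets `S` and `T`, i.e. `L ∈ ℒ_S ∩ ℒ_T`. -/
def meets {d : ℕ} (L S T : Set (EuclideanSpace ℝ (Fin d))) : Prop :=
  (L ∩ S).Nonempty ∧ (L ∩ T).Nonempty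

/-- Orthogonal projection onto the hyperplane `θ^⊥` (for `θ` a unit vector). -/
def projHyp {d : ℕ} (θ x : EuclideanSpace ℝ (Fin d)) : EuclideanSpace ℝ (Fin d) :=
  x - (inner ℝ x θ : ℝ) • θ

/-- The rotation-invariant (uniform) probability measure on the unit sphere of `ℝ^d`. -/
def sphereUniform (d : ℕ) :
    Measure (Metric.sphere (0 : EuclideanSpace ℝ (Fin d)) 1) :=
  (((volume : Measure (EuclideanSpace ℝ (Fin d))).toSphere Set.univ)⁻¹) •
    ((volume : Measure (EuclideanSpace ℝ (Fin d))).toSphere)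

/-- The axis-parallel closed cube of sidelength 1 centered at `q`. -/
def unitCube {d : ℕ} (q : EuclideanSpace ℝ (Fin d)) : Set (EuclideanSpace ℝ (Fin d)) :=
  {x | ∀ j : Fin d, |x j - q j| ≤ 1 / 2}

open Metric

section Coordinates

variable {ι : Type*} [Fintype ι]

lemma abs_apply_sub_le_of_mem_closedBall {x c : EuclideanSpace ℝ ι} {r : ℝ}
    (hx : x ∈ closedBall c r) (k : ι) : |x k - c k| ≤ r :=
  (PiLp.dist_apply_le x c k).trans hx

variable [DecidableEq ι]

lemma abs_apply_le_of_mem_closedBall_single {x : EuclideanSpace ℝ ι} {k : ι} {c r : ℝ}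
    (hx : x ∈ closedBall (EuclideanSpace.single k c) r) :
    |x k - c| ≤ r ∧ ∀ l ≠ k, |x l| ≤ r := by
  refine ⟨by simpa using abs_apply_sub_le_of_mem_closedBall hx k, fun l hl => ?_⟩
  simpa [PiLp.single_apply, hl] using abs_apply_sub_le_of_mem_closedBall hx l

end Coordinates

lemma stdv_apply {d : ℕ} (i : ℕ) (k : Fin d) : stdv d i k = if (k : ℕ) = i then 1 else 0 := by
  unfold stdv
  split_ifs with hi hk hk
  · simp [Fin.ext_iff, hk]
  · simp [Fin.ext_iff, hk]
  · omega
  · rfl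

lemma qpt_apply {d : ℕ} (p : EuclideanSpace ℝ (Fin d)) (R : ℝ) (m i : ℕ) (k : Fin d) :
    qpt d p R m i k = p k + if (k : ℕ) = i + 2 then (10 * d + 1) * R ^ m else 0 := by
  simp [qpt, stdv_apply]

lemma abs_apply_zero_le_of_mem_bigBox_one {d : ℕ} {p z : EuclideanSpace ℝ (Fin d)} {R : ℝ}
    {m : ℕ} (hz : z ∈ bigBox d p R m 1) (h0 : 0 < d) (hp : coordNat p 0 = 0) :
    |z ⟨0, h0⟩| ≤ R ^ m / 2 := by
  have hp0 : p ⟨0, h0⟩ = 0 := by simpa [coordNat, h0] using hp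
  simpa [qpt_apply, hp0] using hz ⟨0, h0⟩

lemma mul_pow_le_apply_three_of_mem_bigBox_one {d : ℕ} {p z : EuclideanSpace ℝ (Fin d)}
    {R : ℝ} {m : ℕ} (hz : z ∈ bigBox d p R m 1) (hd : 4 ≤ d) (hp : 2 * |p ⟨3, by omega⟩| ≤ R)
    (hR : R ≤ R ^ m) : 40 * R ^ m ≤ z ⟨3, by omega⟩ := by
  have hz₃ := (abs_le.mp (hz ⟨3, by omega⟩)).1
  simp only [qpt_apply, if_true] at hz₃
  have hd' : (4 : ℝ) ≤ d := by exact_mod_cast hd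
  have hRm : 0 ≤ R ^ m := by linarith [abs_nonneg (p ⟨3, by omega⟩)]
  nlinarith [neg_abs_le (p ⟨3, by omega⟩)]

lemma abs_lt_of_single_mem_cylOnePiece {d : ℕ} {R : ℝ} {m : ℕ} (h0 : 0 < d) {c : ℝ}
    (hc : EuclideanSpace.single (⟨0, h0⟩ : Fin d) c ∈ cylOnePiece d R m) :
    |c| < R ^ m / 2 - 10 * Real.sqrt d := by
  simpa [coordNat, h0] using hc.2.2

lemma IsLine.apply_sub_mul_apply_sub {d : ℕ} {L : Set (EuclideanSpace ℝ (Fin d))}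
    (hL : IsLine L) {x y z : EuclideanSpace ℝ (Fin d)} (hx : x ∈ L) (hy : y ∈ L) (hz : z ∈ L)
    (k l : Fin d) : (z k - x k) * (y l - x l) = (z l - x l) * (y k - x k) := by
  obtain ⟨a, v, -, rfl⟩ := hL
  obtain ⟨⟨s, rfl⟩, ⟨t, rfl⟩, ⟨u, rfl⟩⟩ := And.intro hx (And.intro hy hz)
  simp only [PiLp.add_apply, PiLp.smul_apply, smul_eq_mul]
  ring

lemma abs_sub_sub_le_abs_sub {a b x y r : ℝ} (hx : |x - a| ≤ r) (hy : |y - b| ≤ r) :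
    |b - a| - 2 * r ≤ |y - x| := by
  rcases abs_cases (b - a) with ⟨h, -⟩ | ⟨h, -⟩ <;>
    linarith [abs_le.mp hx, abs_le.mp hy, le_abs_self (y - x), neg_abs_le (y - x)]

lemma abs_sub_mul_le_of_mul_sub_eq {x₁ x₂ y₁ y₂ z₁ z₂ δ : ℝ}
    (h : (z₁ - x₁) * (y₂ - x₂) = (z₂ - x₂) * (y₁ - x₁)) (hδ : δ ≤ |y₁ - x₁|) :
    |z₂ - x₂| * δ ≤ |z₁ - x₁| * |y₂ - x₂| :=
  calc |z₂ - x₂| * δ ≤ |z₂ - x₂| * |y₁ - x₁| := mul_le_mul_of_nonneg_left hδ (abs_nonneg _)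
    _ = |z₁ - x₁| * |y₂ - x₂| := by rw [← abs_mul, ← abs_mul, h]

theorem stmt16 (d : ℕ) (hd : 4 ≤ d) :
    ∃ R₀ : ℝ, ∀ p : EuclideanSpace ℝ (Fin d),
      coordNat p 0 = 0 → coordNat p 1 = 0 →
      ∀ R : ℝ, R₀ ≤ R → (∀ i : Fin d, 2 * |p i| ≤ R) →
      ∀ m : ℕ, 1 ≤ m →
      ∀ i j : ℤ, i ≠ j →
        Metric.closedBall (EuclideanSpace.single (⟨0, by omega⟩ : Fin d) (i : ℝ)) (1 / 8) ⊆
          cylOnePiece d R m →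
        Metric.closedBall (EuclideanSpace.single (⟨0, by omega⟩ : Fin d) (j : ℝ)) (1 / 8) ⊆
          cylOnePiece d R m →
      ∀ q : EuclideanSpace ℝ (Fin d), unitCube q ⊆ bigBox d p R m 1 →
      ∀ L : Set (EuclideanSpace ℝ (Fin d)), IsLine L →
        ¬ ((L ∩ unitCube q).Nonempty ∧
           (L ∩ Metric.closedBall
              (EuclideanSpace.single (⟨0, by omega⟩ : Fin d) (i : ℝ)) (1 / 8)).Nonempty ∧
           (L ∩ Metric.closedBall
              (EuclideanSpace.single (⟨0, by omega⟩ : Fin d) (j : ℝ)) (1 / 8)).Nonempty) := by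
  refine ⟨1, fun p hp _ R hR hpR m hm i j hij hDi _ q hq L hL ⟨⟨z, hzL, hzq⟩, ⟨x, hxL, hxD⟩,
    ⟨y, hyL, hyD⟩⟩ => ?_⟩
  have h0 : 0 < d := by omega
  have h3 : 3 < d := by omega
  have hRm : R ≤ R ^ m := le_self_pow₀ hR (by omega)
  obtain ⟨hx₀, hx₃⟩ := abs_apply_le_of_mem_closedBall_single hxD
  obtain ⟨hy₀, hy₃⟩ := abs_apply_le_of_mem_closedBall_single hyD
  have hx₃ := abs_le.mp (hx₃ ⟨3, h3⟩ (by simp))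
  have hy₃ := abs_le.mp (hy₃ ⟨3, h3⟩ (by simp))
  have hi := abs_le.mp (abs_lt_of_single_mem_cylOnePiece h0 (hDi (mem_closedBall_self
    (by norm_num)))).le
  have hz₀ := abs_le.mp (abs_apply_zero_le_of_mem_bigBox_one (hq hzq) h0 hp)
  have hz₃ := mul_pow_le_apply_three_of_mem_bigBox_one (hq hzq) hd (hpR _) hRm
  have hij : (1 : ℝ) ≤ |(i : ℝ) - j| := by exact_mod_cast Int.one_le_abs (sub_ne_zero.mpr hij)
  have hsep : 3 / 4 ≤ |y ⟨0, h0⟩ - x ⟨0, h0⟩| := by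
    linarith [abs_sub_sub_le_abs_sub hx₀ hy₀, abs_sub_comm (i : ℝ) j]
  have hslope := abs_sub_mul_le_of_mul_sub_eq
    (hL.apply_sub_mul_apply_sub hxL hyL hzL ⟨0, h0⟩ ⟨3, h3⟩) hsep
  have hrun : |z ⟨0, h0⟩ - x ⟨0, h0⟩| ≤ R ^ m + 1 / 8 := by
    rw [abs_le] at hx₀ ⊢
    constructor <;> linarith [Real.sqrt_nonneg d]
  have hrise : |y ⟨3, h3⟩ - x ⟨3, h3⟩| ≤ 1 / 4 := abs_le.mpr ⟨by linarith, by linarith⟩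
  have hfar : 40 * R ^ m - 1 / 8 ≤ |z ⟨3, h3⟩ - x ⟨3, h3⟩| := by
    linarith [le_abs_self (z ⟨3, h3⟩ - x ⟨3, h3⟩)]
  nlinarith [mul_le_mul hrun hrise (abs_nonneg _) (by positivity)]
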